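/- The following hold: (a) max_{0 ≤ i ≤ I} γ(i) → 0 as n → ∞; (b) there exists a constant c > 0 such that for all sufficiently large n and all 0 ≤ i ≤ I, γ(i) ≥ c·n^{-5ε}; (c) for all sufficiently large n and all 0 ≤ i ≤ I, n^{-30ε} ≤ Γ(i) ≤ n^{-10ε}. -/

import Mathlib

open MeasureTheory Finset Filter

namespace TF

noncomputable section
open scoped Classical

/-- Edges of the complete graph on `Fin n` are elements of `Sym2 (Fin n)`. -/
abbrev Edge (n : ℕ) := Sym2 (Fin n)

/-- The edge set of the complete graph `K_n` (non-diagonal pairs). -/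
def allEdges (n : ℕ) : Finset (Edge n) := Finset.univ.filter (fun e => ¬ e.IsDiag)

/-- Three edges form a triangle. -/
def IsTri {n : ℕ} (e f g : Edge n) : Prop :=
  ∃ a b c : Fin n, a ≠ b ∧ b ≠ c ∧ a ≠ c ∧ e = s(a, b) ∧ f = s(b, c) ∧ g = s(a, c)

/-- An edge set is triangle-free. -/
def TriFree {n : ℕ} (T : Finset (Edge n)) : Prop :=
  ∀ e ∈ T, ∀ f ∈ T, ∀ g ∈ T, ¬ IsTri e f g

/-- Adding `e` to `T` does not create a triangle. -/
def AddOK {n : ℕ} (T : Finset (Edge n)) (e : Edge n) : Prop :=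
  ∀ f ∈ T, ∀ g ∈ T, ¬ IsTri e f g

/-- Traverse a list of edges, adding each to the current graph unless
its addition creates a triangle (or it is a loop). -/
def greedy {n : ℕ} (T : Finset (Edge n)) : List (Edge n) → Finset (Edge n)
  | [] => T
  | e :: l => if AddOK T e ∧ ¬ e.IsDiag then greedy (insert e T) l else greedy T l

/-- The edges of `s`, listed in increasing order of birthtime. -/
def sortByBirth {n : ℕ} (β : Edge n → ℝ) (s : Finset (Edge n)) : List (Edge n) :=
  s.toList.mergeSort (fun a b => β a ≤ β b)

/-- `δ := 1/⌊n^ε⌋`. -/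
def del (n : ℕ) (ε : ℝ) : ℝ := 1 / (⌊(n : ℝ) ^ ε⌋₊ : ℝ)

/-- `I := δ^{-2} = ⌊n^ε⌋²`. -/
def Inat (n : ℕ) (ε : ℝ) : ℕ := (⌊(n : ℝ) ^ ε⌋₊) ^ 2

/-- `M := n^{20000ε}`. -/
def Mc (n : ℕ) (ε : ℝ) : ℝ := (n : ℝ) ^ (20000 * ε)

/-- The imaginary error function `erfi(x) = (2/√π)∫₀ˣ exp(t²) dt`. -/
def erfi (x : ℝ) : ℝ := (2 / Real.sqrt Real.pi) * ∫ t in (0:ℝ)..x, Real.exp (t ^ 2)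

/-- `Φ` is the inverse function of `y ↦ (√π/2)·erfi y`; equivalently it is the
solution of `Φ(0) = 0`, `Φ'(x) = exp (-Φ(x)²)`. -/
def Phi : ℝ → ℝ := Function.invFun (fun y : ℝ => (Real.sqrt Real.pi / 2) * erfi y)

/-- `φ(x) := exp (-Φ(x)²)`, the derivative of `Φ`. -/
def phi (x : ℝ) : ℝ := Real.exp (-(Phi x) ^ 2)

/-- `m := ⌊n^{100ε}⌋·φ(iδ)⁻¹`. -/
def mc (n : ℕ) (ε : ℝ) (i : ℕ) : ℝ := (⌊(n : ℝ) ^ (100 * ε)⌋₊ : ℝ) * (phi (i * del n ε))⁻¹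

/-- `γ(i) := max{δΦ(iδ)φ(iδ), δ²φ(iδ)²}`. -/
def gam (n : ℕ) (ε : ℝ) (i : ℕ) : ℝ :=
  max (del n ε * Phi (i * del n ε) * phi (i * del n ε))
      (del n ε ^ 2 * phi (i * del n ε) ^ 2)

/-- `Γ(0) := n^{-30ε}`, `Γ(i) := Γ(i-1)(1 + 10γ(i-1))`. -/
def Gam (n : ℕ) (ε : ℝ) : ℕ → ℝ
  | 0 => (n : ℝ) ^ (-30 * ε)
  | i + 1 => Gam n ε i * (1 + 10 * gam n ε i)

/-- `x = a(1 ± b)`, i.e. `a(1-b) ≤ x ≤ a(1+b)`. -/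
def within (x a b : ℝ) : Prop := a * (1 - b) ≤ x ∧ x ≤ a * (1 + b)

/-- The uniform probability measure on a set of reals. -/
def unif (s : Set ℝ) : Measure ℝ := (volume s)⁻¹ • volume.restrict s

/-- The product measure under which every edge of `K_n` receives an
independent uniform birthtime in `[0,1]`. -/
def stepMeasure (n : ℕ) : Measure (Edge n → ℝ) :=
  Measure.pi fun _ => unif (Set.Icc 0 1)

/-- `Λ₀(g,i)`: pairs `{g₁,g₂} ⊆ TF_i` forming a triangle with `g`. -/
def Lam0 {n : ℕ} (TFi : Finset (Edge n)) (g : Edge n) : Finset (Finset (Edge n)) :=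
  (TFi.powersetCard 2).filter
    (fun P => ∃ g1 ∈ P, ∃ g2 ∈ P, g1 ≠ g2 ∧ IsTri g g1 g2)

/-- `Λ₁(g,i)`: singletons (identified with edges) `g₁ ∉ B_{≤i}` such that some
`g₂ ∈ TF_i` makes `{g,g₁,g₂}` a triangle and `TF_i ∪ {g₁}` is triangle-free. -/
def Lam1 {n : ℕ} (TFi Bprev : Finset (Edge n)) (g : Edge n) : Finset (Edge n) :=
  (allEdges n \ Bprev).filter
    (fun g1 => (∃ g2 ∈ TFi, IsTri g g1 g2) ∧ TriFree (insert g1 TFi))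

/-- `Λ₂(g,i)`: pairs `{g₁,g₂} ⊆ K_n ∖ B_{≤i}` forming a triangle with `g`
such that `TF_i ∪ {g_j}` is triangle-free for both `j ∈ {1,2}`. -/
def Lam2 {n : ℕ} (TFi Bprev : Finset (Edge n)) (g : Edge n) : Finset (Finset (Edge n)) :=
  ((allEdges n \ Bprev).powersetCard 2).filter
    (fun P => (∃ g1 ∈ P, ∃ g2 ∈ P, g1 ≠ g2 ∧ IsTri g g1 g2) ∧
      ∀ f ∈ P, TriFree (insert f TFi))

/-- The process is well-behaved at step `i` (the precondition of the
key lemma), for a given instance `(TF_i, B_{≤i})`. -/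
def WellBehaved (n : ℕ) (ε : ℝ) (i : ℕ) (TFi Bprev : Finset (Edge n)) : Prop :=
  (∀ g ∈ allEdges n, ((Lam0 TFi g).card : ℝ) ≤ i * (n : ℝ) ^ (5 * ε) ∧
      ((Lam1 TFi Bprev g).card : ℝ) ≤ i * Real.sqrt n) ∧
  (∀ g ∈ allEdges n \ Bprev,
    within ((Lam1 TFi Bprev g).card : ℝ)
      (2 * Real.sqrt n * Phi (i * del n ε) * phi (i * del n ε)) (Gam n ε i) ∧
    within ((Lam2 TFi Bprev g).card : ℝ)
      ((n : ℝ) * phi (i * del n ε) ^ 2) (Gam n ε i))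

/-- Structural properties of any instance of the state `(TF_i, B_{≤i})` of the
process: `TF_i ⊆ B_{≤i} ⊆ K_n` and `TF_i` is triangle-free. -/
def Instance (n : ℕ) (TFi Bprev : Finset (Edge n)) : Prop :=
  TFi ⊆ Bprev ∧ Bprev ⊆ allEdges n ∧ TriFree TFi

/-- The set `B_{i+1}` determined by the fresh birthtimes `β = β_{i+1}`. -/
def Bnext (n : ℕ) (ε : ℝ) (Bprev : Finset (Edge n)) (β : Edge n → ℝ) : Finset (Edge n) :=
  (allEdges n \ Bprev).filter (fun f => β f < del n ε * (n : ℝ) ^ (-(1:ℝ)/2))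

/-- The graph `TF_{i+1}`, obtained by traversing the edges of `B_{i+1}` in
increasing order of birthtime, adding each unless a triangle is created. -/
def TFnext (n : ℕ) (ε : ℝ) (TFi Bprev : Finset (Edge n)) (β : Edge n → ℝ) : Finset (Edge n) :=
  greedy TFi (sortByBirth β (Bnext n ε Bprev β))

/-- `B^⋆_{i+1}` as a function of the birthtimes: the edges outside `B_{≤i}`
with birthtime below `M·n^{-1/2}`. -/
def BstarOf (n : ℕ) (ε : ℝ) (Bprev : Finset (Edge n)) (β : Edge n → ℝ) : Finset (Edge n) :=
  (allEdges n \ Bprev).filter (fun f => β f < Mc n ε * (n : ℝ) ^ (-(1:ℝ)/2))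

/-- `B^*_{i+1}` as a function of the birthtimes: the edges outside `B_{≤i}`
with birthtime below `m·n^{-1/2}`. -/
def BsubOf (n : ℕ) (ε : ℝ) (i : ℕ) (Bprev : Finset (Edge n)) (β : Edge n → ℝ) : Finset (Edge n) :=
  (allEdges n \ Bprev).filter (fun f => β f < mc n ε i * (n : ℝ) ^ (-(1:ℝ)/2))

/-- `Λ^⋆₁`-type family: members of `Λ₁` contained in the selected edge set. -/
def LamS1 {n : ℕ} (TFi Bprev Bsel : Finset (Edge n)) (g : Edge n) : Finset (Edge n) :=
  (Lam1 TFi Bprev g).filter (fun e => e ∈ Bsel)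

/-- `Λ^⋆₂`-type family: members of `Λ₂` contained in the selected edge set. -/
def LamS2 {n : ℕ} (TFi Bprev Bsel : Finset (Edge n)) (g : Edge n) : Finset (Finset (Edge n)) :=
  (Lam2 TFi Bprev g).filter (fun P => P ⊆ Bsel)

/-- `Λ^{⋆⋆}₂`: members of `Λ₂` meeting the selected edge set in one edge. -/
def LamSS2 {n : ℕ} (TFi Bprev Bsel : Finset (Edge n)) (g : Edge n) : Finset (Finset (Edge n)) :=
  (Lam2 TFi Bprev g).filter (fun P => (P ∩ Bsel).card = 1)

/-- The event `E^⋆(h)`: properties P1–P4. -/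
def Estar (n : ℕ) (ε : ℝ) (i : ℕ) (TFi Bprev Bstar : Finset (Edge n)) (h : ℝ) : Prop :=
  (∀ g ∈ allEdges n \ Bprev,
    within ((LamS1 TFi Bprev Bstar g).card : ℝ)
      (2 * Mc n ε * Phi (i * del n ε) * phi (i * del n ε))
      (Gam n ε i + h * Gam n ε i * gam n ε i) ∧
    within ((LamS2 TFi Bprev Bstar g).card : ℝ)
      (Mc n ε ^ 2 * phi (i * del n ε) ^ 2)
      (Gam n ε i + h * Gam n ε i * gam n ε i) ∧
    within ((LamSS2 TFi Bprev Bstar g).card : ℝ)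
      (2 * Mc n ε * Real.sqrt n * phi (i * del n ε) ^ 2)
      (Gam n ε i + h * Gam n ε i * gam n ε i)) ∧
  (∀ w x y : Fin n, w ≠ x → x ≠ y → w ≠ y →
    s(w, x) ∉ Bprev → s(x, y) ∉ Bprev →
    (((Finset.univ.filter (fun z : Fin n => z ≠ w ∧ z ≠ x ∧ z ≠ y ∧
        s(w, z) ∈ TFi ∧ s(y, z) ∈ TFi ∧ s(x, z) ∈ Bstar)).card : ℝ) ≤ Real.log n ^ 2 ∧
     ((Finset.univ.filter (fun z : Fin n => z ≠ w ∧ z ≠ x ∧ z ≠ y ∧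
        s(w, z) ∈ TFi ∧ s(x, z) ∈ Bstar ∧ s(y, z) ∈ Bstar)).card : ℝ) ≤ Real.log n ^ 2 ∧
     ((Finset.univ.filter (fun z : Fin n => z ≠ w ∧ z ≠ x ∧ z ≠ y ∧
        s(w, z) ∈ TFi ∧ s(x, z) ∉ Bprev ∧ s(y, z) ∈ Bstar)).card : ℝ) ≤ Mc n ε ^ 2)) ∧
  (∀ x y : Fin n, x ≠ y →
    ((Finset.univ.filter (fun z : Fin n => z ≠ x ∧ z ≠ y ∧
        s(x, z) ∈ Bstar ∧ s(y, z) ∈ Bstar)).card : ℝ) ≤ 2 * Mc n ε ^ 2) ∧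
  (∀ x : Fin n,
    ((Finset.univ.filter (fun y : Fin n => y ≠ x ∧ s(x, y) ∈ Bstar)).card : ℝ)
      ≤ 2 * Mc n ε * Real.sqrt n)

/-- The children (labeled by sets of edges) of a tree node labeled `g` whose
grandparent is labeled `prev`, in the tree built from the selected edge set
`Bsel` (`Bsel = B^⋆_{i+1}` gives `T^⋆`, `Bsel = B^*_{i+1}` gives `T^*`). -/
def childSets {n : ℕ} (TFi Bprev Bsel : Finset (Edge n)) (g : Edge n) :
    Option (Edge n) → Finset (Finset (Edge n))
  | none => (LamS1 TFi Bprev Bsel g).image (fun e => {e}) ∪ LamS2 TFi Bprev Bsel g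
  | some g' => ((LamS2 TFi Bprev Bsel g).filter (fun G => g' ∉ G)) ∪
      ((LamS1 TFi Bprev Bsel g).filter
        (fun e => e ≠ g' ∧ ¬ IsTri e g g')).image (fun e => {e})

/-- Survival of a tree node labeled `g` with grandparent label `prev`, when
the birthtime of the node's label is `b` and `l` further generations follow:
a non-leaf node survives iff for every child `G` all of whose edges have
birthtime below `min{b, δn^{-1/2}}`, some child of `G` does not survive. -/
def surv (n : ℕ) (ε : ℝ) (TFi Bprev Bsel : Finset (Edge n)) (β : Edge n → ℝ) :
    ℕ → Edge n → Option (Edge n) → ℝ → Prop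
  | 0, _, _, _ => True
  | l + 1, g, prev, b => ∀ G ∈ childSets TFi Bprev Bsel g prev,
      (∀ f ∈ G, β f < min b (del n ε * (n : ℝ) ^ (-(1:ℝ)/2))) →
      ∃ f ∈ G, ¬ surv n ε TFi Bprev Bsel β l f (some g) (β f)

/-- The event `A_{g,l}`: the root of `T_{g,l}` survives. -/
def Aev (n : ℕ) (ε : ℝ) (TFi Bprev Bsel : Finset (Edge n)) (β : Edge n → ℝ)
    (l : ℕ) (g : Edge n) : Prop :=
  surv n ε TFi Bprev Bsel β l g none (β g)

/-- The event `A_{F,l} := ∩_{f ∈ F} A_{f,l}`. -/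
def AevF (n : ℕ) (ε : ℝ) (TFi Bprev Bsel : Finset (Edge n)) (β : Edge n → ℝ)
    (l : ℕ) (F : Finset (Edge n)) : Prop :=
  ∀ f ∈ F, Aev n ε TFi Bprev Bsel β l f

/-- The conditional distribution of the birthtimes `β_{i+1}` given that
`B^⋆_{i+1} = Bstar` was chosen, that the edges of `F1` fall in `B_{i+1}`,
and that the edges of `Fex` do not fall in `B_{i+1}`. -/
def condM (n : ℕ) (ε : ℝ) (Bprev Bstar F1 Fex : Finset (Edge n)) : Measure (Edge n → ℝ) :=
  Measure.pi fun e =>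
    if e ∈ F1 then unif (Set.Ico 0 (del n ε * (n : ℝ) ^ (-(1:ℝ)/2)))
    else if e ∈ Fex then
      (if e ∈ Bstar then
          unif (Set.Ico (del n ε * (n : ℝ) ^ (-(1:ℝ)/2)) (Mc n ε * (n : ℝ) ^ (-(1:ℝ)/2)))
        else unif (Set.Ioc (Mc n ε * (n : ℝ) ^ (-(1:ℝ)/2)) 1))
    else if e ∈ Bstar then unif (Set.Ico 0 (Mc n ε * (n : ℝ) ^ (-(1:ℝ)/2)))
    else if e ∈ Bprev then unif (Set.Icc 0 1)
    else unif (Set.Ioc (Mc n ε * (n : ℝ) ^ (-(1:ℝ)/2)) 1)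

/-- As `condM`, but additionally given that `B^*_{i+1} = Bsub` was chosen. -/
def condM2 (n : ℕ) (ε : ℝ) (i : ℕ) (Bprev Bstar Bsub F1 Fex : Finset (Edge n)) :
    Measure (Edge n → ℝ) :=
  Measure.pi fun e =>
    if e ∈ F1 then unif (Set.Ico 0 (del n ε * (n : ℝ) ^ (-(1:ℝ)/2)))
    else if e ∈ Fex then
      (if e ∈ Bsub then
          unif (Set.Ico (del n ε * (n : ℝ) ^ (-(1:ℝ)/2)) (mc n ε i * (n : ℝ) ^ (-(1:ℝ)/2)))
        else if e ∈ Bstar then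
          unif (Set.Ico (mc n ε i * (n : ℝ) ^ (-(1:ℝ)/2)) (Mc n ε * (n : ℝ) ^ (-(1:ℝ)/2)))
        else unif (Set.Ioc (Mc n ε * (n : ℝ) ^ (-(1:ℝ)/2)) 1))
    else if e ∈ Bsub then unif (Set.Ico 0 (mc n ε i * (n : ℝ) ^ (-(1:ℝ)/2)))
    else if e ∈ Bstar then
      unif (Set.Ico (mc n ε i * (n : ℝ) ^ (-(1:ℝ)/2)) (Mc n ε * (n : ℝ) ^ (-(1:ℝ)/2)))
    else if e ∈ Bprev then unif (Set.Icc 0 1)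
    else unif (Set.Ioc (Mc n ε * (n : ℝ) ^ (-(1:ℝ)/2)) 1)

/-- A descending path of labels from a (root) node labeled `g` whose
grandparent label is `prev`: each step records the label of a set-node
together with the label of one of its edge-children. -/
def chain {n : ℕ} (TFi Bprev Bsel : Finset (Edge n)) :
    Edge n → Option (Edge n) → List (Finset (Edge n) × Edge n) → Prop
  | _, _, [] => True
  | g, prev, (G, g') :: rest =>
      G ∈ childSets TFi Bprev Bsel g prev ∧ g' ∈ G ∧ chain TFi Bprev Bsel g' (some g) rest

/-- The (edge) label of the node-at-even-distance reached by a path. -/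
def lbl {n : ℕ} (f : Edge n) (path : List (Finset (Edge n) × Edge n)) : Edge n :=
  (path.map Prod.snd).getLastD f

/-- The label of the grandparent of the node reached by a path. -/
def prevLbl {n : ℕ} (f : Edge n) (path : List (Finset (Edge n) × Edge n)) : Option (Edge n) :=
  if path.isEmpty then none else some (lbl f path.dropLast)

/-- The event `E^*_F`: an edge labeling a node at even distance from the root
of a tree of `T^*_{F,L}` labels no other such node. -/
def EstarF (n : ℕ) (TFi Bprev Bsub : Finset (Edge n)) (L : ℕ) (F : Finset (Edge n)) : Prop :=
  ∀ f ∈ F, ∀ f' ∈ F, ∀ path path' : List (Finset (Edge n) × Edge n),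
    chain TFi Bprev Bsub f none path → chain TFi Bprev Bsub f' none path' →
    path.length ≤ L → path'.length ≤ L →
    lbl f path = lbl f' path' → f = f' ∧ path = path'

/-- The event `E^*`. -/
def EstarSub (n : ℕ) (ε : ℝ) (i : ℕ) (TFi Bprev Bsub : Finset (Edge n)) : Prop :=
  ∀ g ∈ allEdges n \ Bprev,
    within ((LamS1 TFi Bprev Bsub g).card : ℝ)
      (2 * mc n ε i * Phi (i * del n ε) * phi (i * del n ε)) (1.01 * Gam n ε i) ∧
    within ((LamS2 TFi Bprev Bsub g).card : ℝ)
      (mc n ε i ^ 2 * phi (i * del n ε) ^ 2) (1.01 * Gam n ε i)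

/-- The iterates `p_l` of the limiting survival recursion (with `c1 = φ(iδ)`
and `c2 = Φ(iδ)`): `p₀ ≡ 1` and
`p_{l+1}(x) = exp(-P_l(x)²c₁² - 2P_l(x)c₂c₁)` where `P_l(x) := ∫₀ˣ p_l`. -/
def plim (c1 c2 : ℝ) : ℕ → ℝ → ℝ
  | 0 => fun _ => 1
  | l + 1 => fun x =>
      Real.exp (-(∫ y in (0:ℝ)..x, plim c1 c2 l y) ^ 2 * c1 ^ 2 -
        2 * (∫ y in (0:ℝ)..x, plim c1 c2 l y) * c2 * c1)

/-- The staged triangle-free process: `stage i = (TF_i, B_{≤i})`. -/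
def stage (n : ℕ) (ε : ℝ) (β : ℕ → Edge n → ℝ) : ℕ → Finset (Edge n) × Finset (Edge n)
  | 0 => (∅, ∅)
  | i + 1 =>
      let p := stage n ε β i
      (TFnext n ε p.1 p.2 (β (i + 1)), p.2 ∪ Bnext n ε p.2 (β (i + 1)))

/-- The sample space for the stages `0,…,I` of the process: independent
uniform birthtimes in `[0,1]` for every stage and every edge. -/
def stagesMeasure (n : ℕ) (ε : ℝ) : Measure (Fin (Inat n ε + 1) → Edge n → ℝ) :=
  Measure.pi fun _ => stepMeasure n

/-- Extend a finitely-indexed family of birthtimes to all stages. -/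
def extendB (n : ℕ) (ε : ℝ) (ω : Fin (Inat n ε + 1) → Edge n → ℝ) : ℕ → Edge n → ℝ :=
  fun k => if h : k < Inat n ε + 1 then ω ⟨k, h⟩ else fun _ => 0

/-- `TF_I` as a function of the birthtimes. -/
def TFI (n : ℕ) (ε : ℝ) (ω : Fin (Inat n ε + 1) → Edge n → ℝ) : Finset (Edge n) :=
  (stage n ε (extendB n ε ω) (Inat n ε)).1

/-- The final graph `TF(n)` of the (one-shot) triangle-free process. -/
def TFone (n : ℕ) (β : Edge n → ℝ) : Finset (Edge n) :=
  greedy ∅ (sortByBirth β (allEdges n))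

/-- `TF(n,p) := TF(n) ∩ {f : β(f) ≤ p}`. -/
def TFnp (n : ℕ) (β : Edge n → ℝ) (p : ℝ) : Finset (Edge n) :=
  (TFone n β).filter (fun f => β f ≤ p)

/-- `Fn` is a copy of the graph `F` inside `K_n`. -/
def IsCopy {V : Type*} (F : SimpleGraph V) {n : ℕ} (Fn : Finset (Edge n)) : Prop :=
  ∃ φ : V → Fin n, Function.Injective φ ∧
    (∀ e, e ∈ Fn ↔ ∃ a b, F.Adj a b ∧ e = s(φ a, φ b))

/-- The number of copies of `F` in the graph on `Fin n` with edge set `T`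
(= #{injective adjacency-preserving maps} / #{automorphisms of F}). -/
def numCopies {V : Type*} [Fintype V] (F : SimpleGraph V) {n : ℕ} (T : Finset (Edge n)) : ℝ :=
  (Nat.card {φ : V → Fin n // Function.Injective φ ∧
      ∀ a b, F.Adj a b → s(φ a, φ b) ∈ T} : ℝ) / (Nat.card (F ≃g F) : ℝ)

/-- The number of edges `e_F` of a graph `F`. -/
def eCard {V : Type*} (F : SimpleGraph V) : ℕ := Nat.card F.edgeSet

/-- `F` is balanced: `e_F/v_F ≥ e_H/v_H` for every subgraph `H ⊆ F`
with at least one vertex. -/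
def Balanced {V : Type*} [Fintype V] (F : SimpleGraph V) : Prop :=
  ∀ H : F.Subgraph, H.verts.Nonempty →
    (Nat.card H.edgeSet : ℝ) / (Nat.card H.verts : ℝ) ≤
      (eCard F : ℝ) / (Fintype.card V : ℝ)

end

end TF

/-!
Write `m = ⌊n^ε⌋`, so `δ = 1/m`, `I = m²` and `iδ ∈ [0, m]`. As `Φ` inverts
`y ↦ ∫₀^y e^{t²}`, we have `0 ≤ Φ(x) ≤ x`, `Φ(x)φ(x) ≤ 1` and `e^{Φ(x)²} ≤ 1 + 2xΦ(x)`;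
these give `δ²/9 ≤ γ(i) ≤ δ`, hence (a) and (b). For (c),
`Γ(i) = n^{-30ε} ∏_{j<i} (1 + 10γ(j)) ≤ n^{-30ε} exp(10 ∑_{j<I} γ(j))`, and `∑_{j<I} γ(j)` is at
most `1` plus a Riemann sum for `∫₀^m Φ Φ' = Φ(m)²/2`. Comparing each step with the increment of
`Φ²` costs a factor `8/5`, so `10 ∑ γ ≤ 8 Φ(m)² + 10 ≤ 8 log(1 + 2m²) + 10 ≤ 16 ε log n + O(1)`,
which stays below the `20 ε log n` needed.
-/

namespace TF
noncomputable section
open scoped Classical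
open Real Filter Topology intervalIntegral

def integralExpSq (y : ℝ) : ℝ := ∫ t in (0 : ℝ)..y, exp (t ^ 2)

lemma intervalIntegrable_exp_sq (a b : ℝ) :
    IntervalIntegrable (fun t : ℝ => exp (t ^ 2)) volume a b :=
  (by fun_prop : Continuous fun t : ℝ => exp (t ^ 2)).intervalIntegrable a b

lemma integralExpSq_sub (a b : ℝ) :
    integralExpSq b - integralExpSq a = ∫ t in a..b, exp (t ^ 2) :=
  integral_interval_sub_left (intervalIntegrable_exp_sq _ _) (intervalIntegrable_exp_sq _ _)

lemma integral_exp_sq_bounds {a b : ℝ} (ha : 0 ≤ a) (hab : a ≤ b) :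
    (b - a) * exp (a ^ 2) ≤ ∫ t in a..b, exp (t ^ 2) ∧
      ∫ t in a..b, exp (t ^ 2) ≤ (b - a) * exp (b ^ 2) := by
  have hconst (c : ℝ) : ∫ _ in a..b, exp (c ^ 2) = (b - a) * exp (c ^ 2) := by
    rw [intervalIntegral.integral_const, smul_eq_mul]
  constructor
  · rw [← hconst]
    refine integral_mono_on hab intervalIntegrable_const (intervalIntegrable_exp_sq a b) ?_
    exact fun t ht => exp_le_exp.mpr (pow_le_pow_left₀ ha ht.1 2)
  · rw [← hconst]
    refine integral_mono_on hab (intervalIntegrable_exp_sq a b) intervalIntegrable_const ?_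
    exact fun t ht => exp_le_exp.mpr (pow_le_pow_left₀ (ha.trans ht.1) ht.2 2)

lemma sub_le_integralExpSq_sub {a b : ℝ} (hab : a ≤ b) :
    b - a ≤ integralExpSq b - integralExpSq a := by
  rw [integralExpSq_sub]
  calc b - a = ∫ _ in a..b, (1 : ℝ) := by simp
    _ ≤ ∫ t in a..b, exp (t ^ 2) :=
      integral_mono_on hab intervalIntegrable_const (intervalIntegrable_exp_sq a b)
        fun t _ => one_le_exp (sq_nonneg t)

lemma integralExpSq_zero : integralExpSq 0 = 0 := integral_same

lemma strictMono_integralExpSq : StrictMono integralExpSq := fun a b hab => by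
  linarith [sub_le_integralExpSq_sub hab.le]

lemma surjective_integralExpSq : Function.Surjective integralExpSq := by
  have hcont : Continuous integralExpSq :=
    continuous_primitive (fun a b => intervalIntegrable_exp_sq a b) 0
  refine hcont.surjective (tendsto_atTop_mono' _ ?_ tendsto_id)
    (tendsto_atBot_mono' _ ?_ tendsto_id)
  · filter_upwards [eventually_ge_atTop 0] with y hy
    simpa [integralExpSq_zero] using sub_le_integralExpSq_sub hy
  · filter_upwards [eventually_le_atBot 0] with y hy
    simpa [integralExpSq_zero] using sub_le_integralExpSq_sub hy

lemma Phi_eq_invFun_integralExpSq : Phi = Function.invFun integralExpSq := by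
  rw [Phi]
  congr 1
  funext y
  have : sqrt π ≠ 0 := (sqrt_pos.mpr pi_pos).ne'
  simp only [erfi, integralExpSq]
  field_simp

lemma integralExpSq_Phi (x : ℝ) : integralExpSq (Phi x) = x := by
  rw [Phi_eq_invFun_integralExpSq]
  exact Function.rightInverse_invFun surjective_integralExpSq x

lemma strictMono_Phi : StrictMono Phi := fun x y hxy => by
  rwa [← strictMono_integralExpSq.lt_iff_lt, integralExpSq_Phi, integralExpSq_Phi]

lemma Phi_zero : Phi 0 = 0 :=
  strictMono_integralExpSq.injective (by rw [integralExpSq_Phi, integralExpSq_zero])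

lemma Phi_nonneg {x : ℝ} (hx : 0 ≤ x) : 0 ≤ Phi x :=
  Phi_zero ▸ strictMono_Phi.monotone hx

lemma Phi_le_self {x : ℝ} (hx : 0 ≤ x) : Phi x ≤ x := by
  simpa [integralExpSq_Phi, integralExpSq_zero] using sub_le_integralExpSq_sub (Phi_nonneg hx)

lemma phi_pos (x : ℝ) : 0 < phi x := exp_pos _

lemma phi_le_one (x : ℝ) : phi x ≤ 1 := exp_le_one_iff.mpr (by nlinarith)

lemma phi_mul_exp_Phi_sq (x : ℝ) : phi x * exp (Phi x ^ 2) = 1 := by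
  rw [phi, ← exp_add, neg_add_cancel, exp_zero]

lemma Phi_mul_phi_le_one (x : ℝ) : Phi x * phi x ≤ 1 := by
  have : Phi x ≤ exp (Phi x ^ 2) := by
    nlinarith [add_one_le_exp (Phi x ^ 2), sq_nonneg (Phi x - 1)]
  nlinarith [phi_mul_exp_Phi_sq x, phi_pos x]

lemma exp_sq_le_one_add_two_mul_integralExpSq {y : ℝ} (hy : 0 ≤ y) :
    exp (y ^ 2) ≤ 1 + 2 * y * integralExpSq y := by
  have hderiv : ∀ t ∈ Set.uIcc 0 y,
      HasDerivAt (fun s : ℝ => exp (s ^ 2)) (exp (t ^ 2) * (2 * t)) t := fun t _ => by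
    simpa using (hasDerivAt_pow 2 t).exp
  have hint : IntervalIntegrable (fun t : ℝ => exp (t ^ 2) * (2 * t)) volume 0 y :=
    (by fun_prop : Continuous fun t : ℝ => exp (t ^ 2) * (2 * t)).intervalIntegrable 0 y
  have hFTC := integral_eq_sub_of_hasDerivAt hderiv hint
  have hmono : ∫ t in (0 : ℝ)..y, exp (t ^ 2) * (2 * t) ≤
      ∫ t in (0 : ℝ)..y, exp (t ^ 2) * (2 * y) :=
    integral_mono_on hy hint ((intervalIntegrable_exp_sq 0 y).mul_const _) fun t ht =>
      mul_le_mul_of_nonneg_left (by linarith [ht.2]) (exp_pos _).le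
  rw [hFTC, intervalIntegral.integral_mul_const] at hmono
  norm_num at hmono
  rw [integralExpSq]
  linarith

lemma exp_Phi_sq_le {x : ℝ} (hx : 0 ≤ x) : exp (Phi x ^ 2) ≤ 1 + 2 * x * Phi x := by
  have := exp_sq_le_one_add_two_mul_integralExpSq (Phi_nonneg hx)
  rw [integralExpSq_Phi] at this
  linarith

lemma Phi_add_sub_bounds {x d : ℝ} (hx : 0 ≤ x) (hd : 0 ≤ d) :
    d * phi (x + d) ≤ Phi (x + d) - Phi x ∧ Phi (x + d) - Phi x ≤ d * phi x := by
  have hint : ∫ t in Phi x..Phi (x + d), exp (t ^ 2) = d := by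
    rw [← integralExpSq_sub, integralExpSq_Phi, integralExpSq_Phi]; ring
  obtain ⟨hlow, hupp⟩ :=
    integral_exp_sq_bounds (Phi_nonneg hx) (strictMono_Phi.monotone (le_add_of_nonneg_right hd))
  rw [hint] at hlow hupp
  constructor
  · calc d * phi (x + d) ≤ (Phi (x + d) - Phi x) * exp (Phi (x + d) ^ 2) * phi (x + d) :=
          mul_le_mul_of_nonneg_right hupp (phi_pos _).le
      _ = Phi (x + d) - Phi x := by rw [mul_assoc, mul_comm (exp _), phi_mul_exp_Phi_sq, mul_one]
  · calc Phi (x + d) - Phi x = (Phi (x + d) - Phi x) * exp (Phi x ^ 2) * phi x := by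
          rw [mul_assoc, mul_comm (exp _), phi_mul_exp_Phi_sq, mul_one]
      _ ≤ d * phi x := mul_le_mul_of_nonneg_right hlow (phi_pos _).le

lemma mul_Phi_mul_phi_le {x d : ℝ} (hx : 0 ≤ x) (hd : 0 ≤ d) (hd8 : d ≤ 1 / 8) :
    d * (Phi x * phi x) ≤ 4 / 5 * (Phi (x + d) ^ 2 - Phi x ^ 2) := by
  obtain ⟨hlow, hupp⟩ := Phi_add_sub_bounds hx hd
  have ha : 0 ≤ Phi x := Phi_nonneg hx
  have hPhiphi := Phi_mul_phi_le_one x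
  set a := Phi x
  set b := Phi (x + d)
  have hba0 : 0 ≤ b - a := (mul_nonneg hd (phi_pos _).le).trans hlow
  have hba : b - a ≤ d := hupp.trans (mul_le_of_le_one_right hd (phi_le_one x))
  have hgap : b ^ 2 - a ^ 2 ≤ 3 / 8 := by
    have : a * (b - a) ≤ d := by nlinarith [mul_le_mul_of_nonneg_left hupp ha]
    nlinarith [mul_le_mul hba hba hba0 hd]
  have hexp : exp (b ^ 2 - a ^ 2) ≤ 8 / 5 := by
    refine (exp_bound_div_one_sub_of_interval (by nlinarith) (by linarith)).trans ?_
    rw [div_le_iff₀ (by linarith)]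
    linarith
  have hratio : phi x ≤ 8 / 5 * phi (x + d) := by
    have : phi x = exp (b ^ 2 - a ^ 2) * phi (x + d) := by
      show exp (-a ^ 2) = exp (b ^ 2 - a ^ 2) * exp (-b ^ 2)
      rw [← exp_add]; ring_nf
    rw [this]
    exact mul_le_mul_of_nonneg_right hexp (phi_pos _).le
  calc d * (a * phi x) ≤ d * (a * (8 / 5 * phi (x + d))) := by gcongr
    _ = 8 / 5 * a * (d * phi (x + d)) := by ring
    _ ≤ 8 / 5 * a * (b - a) := by gcongr
    _ ≤ 4 / 5 * (b ^ 2 - a ^ 2) := by nlinarith [sq_nonneg (b - a)]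

lemma sum_mul_Phi_mul_phi_le {d : ℝ} (hd : 0 ≤ d) (hd8 : d ≤ 1 / 8) (k : ℕ) :
    ∑ j ∈ Finset.range k, d * (Phi (j * d) * phi (j * d)) ≤ 4 / 5 * Phi (k * d) ^ 2 := by
  induction k with
  | zero => simp [Phi_zero]
  | succ k ih =>
    have hstep := mul_Phi_mul_phi_le (x := k * d) (by positivity) hd hd8
    rw [Finset.sum_range_succ, Nat.cast_succ, add_one_mul]
    linarith

section

variable {n : ℕ} {ε : ℝ}

lemma del_nonneg : 0 ≤ del n ε := by unfold del; positivity

lemma del_le_one : del n ε ≤ 1 := by rw [del, one_div]; exact Nat.cast_inv_le_one _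

lemma Inat_mul_sq_del_le_one : (Inat n ε : ℝ) * del n ε ^ 2 ≤ 1 := by
  rcases eq_or_ne ⌊(n : ℝ) ^ ε⌋₊ 0 with hm | hm
  · simp [Inat, hm]
  · simp [Inat, del, hm]

lemma Inat_mul_del (hm : ⌊(n : ℝ) ^ ε⌋₊ ≠ 0) : (Inat n ε : ℝ) * del n ε = ⌊(n : ℝ) ^ ε⌋₊ := by
  simp only [Inat, del, Nat.cast_pow]
  field_simp

lemma gam_nonneg (i : ℕ) : 0 ≤ gam n ε i := le_max_of_le_right (by positivity)

lemma gam_le_del (i : ℕ) : gam n ε i ≤ del n ε := by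
  have hδ : 0 ≤ del n ε := del_nonneg
  have hφ := phi_le_one (i * del n ε)
  refine max_le ?_ ?_
  · rw [mul_assoc]
    exact mul_le_of_le_one_right hδ (Phi_mul_phi_le_one _)
  · calc del n ε ^ 2 * phi (i * del n ε) ^ 2 ≤ del n ε * 1 := by
          gcongr
          · exact pow_le_of_le_one hδ del_le_one two_ne_zero
          · exact pow_le_one₀ (phi_pos _).le hφ
      _ = del n ε := mul_one _

lemma gam_le_add (i : ℕ) :
    gam n ε i ≤ del n ε * (Phi (i * del n ε) * phi (i * del n ε)) + del n ε ^ 2 := by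
  have hδ : 0 ≤ del n ε := del_nonneg
  have hx : 0 ≤ (i : ℝ) * del n ε := by positivity
  have hΦφ : 0 ≤ Phi (i * del n ε) * phi (i * del n ε) :=
    mul_nonneg (Phi_nonneg hx) (phi_pos _).le
  refine max_le (by rw [mul_assoc]; linarith [sq_nonneg (del n ε)]) ?_
  have : del n ε ^ 2 * phi (i * del n ε) ^ 2 ≤ del n ε ^ 2 * 1 := by
    gcongr; exact pow_le_one₀ (phi_pos _).le (phi_le_one _)
  nlinarith [mul_nonneg hδ hΦφ]

lemma sq_del_div_nine_le_gam {i : ℕ} (hi : i ≤ Inat n ε) : del n ε ^ 2 / 9 ≤ gam n ε i := by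
  set δ := del n ε
  set x := (i : ℝ) * δ
  have hδ : 0 ≤ δ := del_nonneg
  have hx : 0 ≤ x := by positivity
  have hxδ : x * δ ≤ 1 := by
    calc x * δ = i * δ ^ 2 := by ring
      _ ≤ Inat n ε * δ ^ 2 := by gcongr
      _ ≤ 1 := Inat_mul_sq_del_le_one
  have hφ := phi_pos x
  have hΦ := Phi_nonneg hx
  -- `exp Φ² ≤ 1 + 2 x Φ` and `x δ ≤ 1` give `δ ≤ δ φ + 2 Φ φ`,
  -- so `δ φ` or `Φ φ` is at least `δ / 3`.
  have hsplit : δ ≤ δ * phi x + 2 * (Phi x * phi x) := by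
    have h1 : 1 ≤ phi x * (1 + 2 * x * Phi x) := by
      calc 1 = phi x * exp (Phi x ^ 2) := (phi_mul_exp_Phi_sq x).symm
        _ ≤ phi x * (1 + 2 * x * Phi x) := by gcongr; exact exp_Phi_sq_le hx
    nlinarith [mul_le_mul_of_nonneg_right hxδ (mul_nonneg hΦ hφ.le)]
  show δ ^ 2 / 9 ≤ max (δ * Phi x * phi x) (δ ^ 2 * phi x ^ 2)
  by_cases h : δ / 3 ≤ δ * phi x
  · exact le_max_of_le_right (by nlinarith)
  · exact le_max_of_le_left (by nlinarith)

lemma sum_gam_le (hm : 8 ≤ ⌊(n : ℝ) ^ ε⌋₊) :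
    ∑ j ∈ Finset.range (Inat n ε), gam n ε j ≤ 4 / 5 * Phi ⌊(n : ℝ) ^ ε⌋₊ ^ 2 + 1 := by
  have hδ8 : del n ε ≤ 1 / 8 := by
    rw [del]; exact one_div_le_one_div_of_le (by norm_num) (by exact_mod_cast hm)
  calc ∑ j ∈ Finset.range (Inat n ε), gam n ε j
      ≤ ∑ j ∈ Finset.range (Inat n ε),
          (del n ε * (Phi (j * del n ε) * phi (j * del n ε)) + del n ε ^ 2) :=
        Finset.sum_le_sum fun j _ => gam_le_add j
    _ = ∑ j ∈ Finset.range (Inat n ε), del n ε * (Phi (j * del n ε) * phi (j * del n ε)) +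
          Inat n ε * del n ε ^ 2 := by
        rw [Finset.sum_add_distrib, Finset.sum_const, Finset.card_range, nsmul_eq_mul]
    _ ≤ 4 / 5 * Phi (Inat n ε * del n ε) ^ 2 + 1 := by
        gcongr
        · exact sum_mul_Phi_mul_phi_le del_nonneg hδ8 _
        · exact Inat_mul_sq_del_le_one
    _ = 4 / 5 * Phi ⌊(n : ℝ) ^ ε⌋₊ ^ 2 + 1 := by
        rw [Inat_mul_del (by omega)]

lemma Gam_eq_mul_prod (i : ℕ) :
    Gam n ε i = (n : ℝ) ^ (-30 * ε) * ∏ j ∈ Finset.range i, (1 + 10 * gam n ε j) := by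
  induction i with
  | zero => simp [Gam]
  | succ i ih => rw [Gam, ih, Finset.prod_range_succ, mul_assoc]

lemma rpow_le_Gam (i : ℕ) : (n : ℝ) ^ (-30 * ε) ≤ Gam n ε i := by
  rw [Gam_eq_mul_prod]
  refine le_mul_of_one_le_right (by positivity) (Finset.one_le_prod fun j _ => ?_)
  linarith [gam_nonneg (n := n) (ε := ε) j]

lemma Gam_le_mul_exp_sum (i : ℕ) :
    Gam n ε i ≤ (n : ℝ) ^ (-30 * ε) * exp (10 * ∑ j ∈ Finset.range i, gam n ε j) := by
  rw [Gam_eq_mul_prod, Finset.mul_sum, exp_sum]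
  gcongr ?_ * ?_
  refine Finset.prod_le_prod (fun j _ => ?_) fun j _ => ?_
  · linarith [gam_nonneg (n := n) (ε := ε) j]
  · linarith [add_one_le_exp (10 * gam n ε j)]

lemma exp_ten_mul_sum_gam_le (hN : 3 ^ 5 ≤ (n : ℝ) ^ ε) :
    exp (10 * ∑ j ∈ Finset.range (Inat n ε), gam n ε j) ≤ ((n : ℝ) ^ ε) ^ 20 := by
  set N := (n : ℝ) ^ ε
  set m := ⌊N⌋₊
  have hm8 : 8 ≤ m := Nat.le_floor (by norm_num at hN ⊢; linarith)
  have hm : (0 : ℝ) ≤ m := m.cast_nonneg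
  have hmN : (m : ℝ) ≤ N := Nat.floor_le (by positivity)
  have hexpPhi : exp (Phi m ^ 2) ≤ 1 + 2 * (m : ℝ) ^ 2 := by
    nlinarith [exp_Phi_sq_le hm, Phi_le_self hm]
  calc exp (10 * ∑ j ∈ Finset.range (Inat n ε), gam n ε j)
      ≤ exp (Phi m ^ 2) ^ 8 * exp 1 ^ 10 := by
        rw [← exp_nat_mul, ← exp_nat_mul, ← exp_add, exp_le_exp]
        push_cast
        linarith [sum_gam_le hm8]
    _ ≤ (1 + 2 * (m : ℝ) ^ 2) ^ 8 * 3 ^ 10 := by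
        gcongr
        exact exp_one_lt_d9.le.trans (by norm_num)
    _ ≤ (3 * N ^ 2) ^ 8 * 3 ^ 10 := by
        gcongr
        nlinarith
    _ = 3 ^ 18 * N ^ 16 := by ring
    _ ≤ N ^ 4 * N ^ 16 := by
        gcongr
        calc (3 : ℝ) ^ 18 ≤ (3 ^ 5) ^ 4 := by norm_num
          _ ≤ N ^ 4 := by gcongr
    _ = N ^ 20 := by ring

lemma Gam_le_rpow (hN : 3 ^ 5 ≤ (n : ℝ) ^ ε) {i : ℕ} (hi : i ≤ Inat n ε) :
    Gam n ε i ≤ (n : ℝ) ^ (-10 * ε) := by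
  have hn : (0 : ℝ) < n := by
    rcases (n.cast_nonneg : (0 : ℝ) ≤ n).eq_or_lt with h | h
    · rw [← h] at hN; linarith [zero_rpow_le_one ε]
    · exact h
  calc Gam n ε i ≤ (n : ℝ) ^ (-30 * ε) * exp (10 * ∑ j ∈ Finset.range i, gam n ε j) :=
        Gam_le_mul_exp_sum i
    _ ≤ (n : ℝ) ^ (-30 * ε) * exp (10 * ∑ j ∈ Finset.range (Inat n ε), gam n ε j) := by
        gcongr ?_ * exp (10 * ?_)
        exact Finset.sum_le_sum_of_subset_of_nonneg (Finset.range_subset_range.mpr hi)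
          fun j _ _ => gam_nonneg j
    _ ≤ (n : ℝ) ^ (-30 * ε) * ((n : ℝ) ^ ε) ^ 20 := by gcongr; exact exp_ten_mul_sum_gam_le hN
    _ = (n : ℝ) ^ (-10 * ε) := by
        rw [← rpow_natCast, ← rpow_mul hn.le, ← rpow_add hn]
        norm_num; ring_nf

lemma rpow_neg_five_mul_le_sq_del (hN : 1 ≤ (n : ℝ) ^ ε) : (n : ℝ) ^ (-5 * ε) ≤ del n ε ^ 2 := by
  set N := (n : ℝ) ^ ε
  have hm : (1 : ℝ) ≤ ⌊N⌋₊ := by exact_mod_cast Nat.le_floor (by exact_mod_cast hN)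
  have hmN : (⌊N⌋₊ : ℝ) ≤ N := Nat.floor_le (by positivity)
  calc (n : ℝ) ^ (-5 * ε) = N ^ (-5 : ℝ) := by rw [← rpow_mul n.cast_nonneg]; ring_nf
    _ ≤ N ^ (-2 : ℝ) := rpow_le_rpow_of_exponent_le hN (by norm_num)
    _ = (1 / N) ^ 2 := by rw [rpow_neg (by positivity), rpow_two, one_div, inv_pow]
    _ ≤ del n ε ^ 2 := by
        rw [del]; gcongr

lemma tendsto_natCast_rpow_atTop (hε : 0 < ε) :
    Tendsto (fun n : ℕ => (n : ℝ) ^ ε) atTop atTop :=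
  (tendsto_rpow_atTop hε).comp tendsto_natCast_atTop_atTop

lemma tendsto_del_atTop (hε : 0 < ε) : Tendsto (fun n => del n ε) atTop (𝓝 0) := by
  simp only [del, one_div]
  exact tendsto_inv_atTop_zero.comp <| tendsto_natCast_atTop_atTop.comp <|
    tendsto_nat_floor_atTop.comp (tendsto_natCast_rpow_atTop hε)

end

theorem fact_gamma_Gamma_bounds_general
    (ε : ℝ) (hε0 : 0 < ε) :
    (∀ ξ : ℝ, 0 < ξ → ∃ N : ℕ, ∀ n ≥ N, ∀ i ≤ Inat n ε, |gam n ε i| < ξ) ∧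
    (∃ c : ℝ, 0 < c ∧ ∃ N : ℕ, ∀ n ≥ N, ∀ i ≤ Inat n ε,
      c * (n : ℝ) ^ (-5 * ε) ≤ gam n ε i) ∧
    (∃ N : ℕ, ∀ n ≥ N, ∀ i ≤ Inat n ε,
      (n : ℝ) ^ (-30 * ε) ≤ Gam n ε i ∧ Gam n ε i ≤ (n : ℝ) ^ (-10 * ε)) := by
  obtain ⟨N, hN⟩ :=
    eventually_atTop.mp ((tendsto_natCast_rpow_atTop hε0).eventually_ge_atTop (3 ^ 5))
  refine ⟨fun ξ hξ => ?_, ⟨1 / 9, by norm_num, N, fun n hn i hi => ?_⟩,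
    ⟨N, fun n hn i hi => ⟨rpow_le_Gam i, Gam_le_rpow (hN n hn) hi⟩⟩⟩
  · obtain ⟨N', hN'⟩ := eventually_atTop.mp ((tendsto_del_atTop hε0).eventually (gt_mem_nhds hξ))
    exact ⟨N', fun n hn i _ => (abs_of_nonneg (gam_nonneg i)).trans_lt
      ((gam_le_del i).trans_lt (hN' n hn))⟩
  · have h1 : (1 : ℝ) ≤ (n : ℝ) ^ ε := le_trans (by norm_num) (hN n hn)
    linarith [rpow_neg_five_mul_le_sq_del h1, sq_del_div_nine_le_gam (n := n) hi]

/-- (Fact (ii).) (a) `max_{0 ≤ i ≤ I} γ(i) → 0`;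
(b) `γ(i) ≥ c·n^{-5ε}` for some `c > 0`, all large `n` and all `0 ≤ i ≤ I`;
(c) `n^{-30ε} ≤ Γ(i) ≤ n^{-10ε}` for all large `n` and all `0 ≤ i ≤ I`. -/
theorem fact_gamma_Gamma_bounds
    (ε : ℝ) (hε0 : 0 < ε) (hε1 : ε < 1 / 10 ^ 10) :
    (∀ ξ : ℝ, 0 < ξ → ∃ N : ℕ, ∀ n ≥ N, ∀ i ≤ Inat n ε, |gam n ε i| < ξ) ∧
    (∃ c : ℝ, 0 < c ∧ ∃ N : ℕ, ∀ n ≥ N, ∀ i ≤ Inat n ε,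
      c * (n : ℝ) ^ (-5 * ε) ≤ gam n ε i) ∧
    (∃ N : ℕ, ∀ n ≥ N, ∀ i ≤ Inat n ε,
      (n : ℝ) ^ (-30 * ε) ≤ Gam n ε i ∧ Gam n ε i ≤ (n : ℝ) ^ (-10 * ε)) :=
  fact_gamma_Gamma_bounds_general ε hε0

end
end TF
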